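/- arXiv:2302.12559 — 6 statements merged into one kernel-verified Lean document; each statement's English description precedes it below -/
import Mathlib

section
/- If f : ℝ^p → ℝ is μ-strongly convex and β-smooth with μ < β, then the operator R(u) = u - (2/(β+μ))∇f(u) is ((β-μ)/(β+μ))-contractive, i.e., Lipschitz with constant (β-μ)/(β+μ) < 1. -/
/-!
Put `g = f - (μ/2)‖·‖²`, with gradient `g' = f' - μ • id`. Convexity of `g` gives the supporting
hyperplanes `g x + ⟪g' x, y - x⟫ ≤ g y`, and the descent lemma for the `β`-smooth `f` gives `g` the
quadratic upper bound with constant `β - μ`. Comparing the supporting hyperplane at `x` with the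
upper bound at `y` at the minimiser of the latter yields cocoercivity
`‖g' u - g' v‖² ≤ (β - μ) ⟪g' u - g' v, u - v⟫`, which in terms of `D = f' u - f' v`, `W = u - v`
reads `‖D‖² + μβ‖W‖² ≤ (β + μ) ⟪D, W⟫`. Expanding `‖W - (2/(β+μ)) D‖²` with this bound gives
`((β - μ)/(β + μ))² ‖W‖²`.
-/

open RealInnerProductSpace Set

lemma le_add_add_half_of_hasDerivAt_le {φ φ' : ℝ → ℝ} {a C : ℝ}
    (hφ : ∀ t ∈ Icc (0 : ℝ) 1, HasDerivAt φ (φ' t) t)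
    (hφ' : ∀ t ∈ Ioo (0 : ℝ) 1, φ' t ≤ a + C * t) :
    φ 1 ≤ φ 0 + a + C / 2 := by
  have hψ : ∀ t ∈ Icc (0 : ℝ) 1,
      HasDerivAt (fun s => φ s - a * s - C / 2 * s ^ 2) (φ' t - a - C * t) t := fun t ht => by
    refine (((hφ t ht).sub ((hasDerivAt_id t).const_mul a)).sub
      ((hasDerivAt_pow 2 t).const_mul (C / 2))).congr_deriv ?_
    norm_num
    ring
  have hanti : AntitoneOn (fun s => φ s - a * s - C / 2 * s ^ 2) (Icc 0 1) := by
    refine antitoneOn_of_hasDerivWithinAt_nonpos (f' := fun t => φ' t - a - C * t) (convex_Icc 0 1)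
      (fun t ht => (hψ t ht).continuousAt.continuousWithinAt) (fun t ht => ?_) (fun t ht => ?_)
    · exact (hψ t (interior_subset ht)).hasDerivWithinAt
    · rw [interior_Icc] at ht
      linarith [hφ' t ht]
  have := hanti (left_mem_Icc.2 zero_le_one) (right_mem_Icc.2 zero_le_one) zero_le_one
  simp only at this
  linarith

variable {E : Type*} [NormedAddCommGroup E] [InnerProductSpace ℝ E]

lemma norm_sub_smul_le_of_sq_add_le_inner {D W : E} {μ β : ℝ} (hβμ : 0 < β + μ)
    (h : ‖D‖ ^ 2 + μ * β * ‖W‖ ^ 2 ≤ (β + μ) * ⟪D, W⟫) :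
    ‖W - (2 / (β + μ)) • D‖ ≤ |β - μ| / (β + μ) * ‖W‖ := by
  have hsq : ‖W - (2 / (β + μ)) • D‖ ^ 2 ≤ (|β - μ| / (β + μ) * ‖W‖) ^ 2 :=
    calc ‖W - (2 / (β + μ)) • D‖ ^ 2
        = ‖W‖ ^ 2 - 2 * (2 / (β + μ) * ⟪D, W⟫) + (2 / (β + μ)) ^ 2 * ‖D‖ ^ 2 := by
          rw [norm_sub_sq_real, real_inner_smul_right, norm_smul, Real.norm_eq_abs, mul_pow,
            sq_abs, real_inner_comm]
      _ = ((β + μ) ^ 2 * ‖W‖ ^ 2 - 4 * ((β + μ) * ⟪D, W⟫) + 4 * ‖D‖ ^ 2) / (β + μ) ^ 2 := by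
          field_simp; ring
      _ ≤ (β - μ) ^ 2 * ‖W‖ ^ 2 / (β + μ) ^ 2 := by gcongr; nlinarith
      _ = (|β - μ| / (β + μ) * ‖W‖) ^ 2 := by rw [mul_pow, div_pow, sq_abs]; ring
  exact (pow_le_pow_iff_left₀ (norm_nonneg _) (by positivity) two_ne_zero).1 hsq

variable [CompleteSpace E]

lemma HasGradientAt.hasDerivAt_comp_add_smul {f : E → ℝ} {f' x w : E} {t : ℝ}
    (hf : HasGradientAt f f' (x + t • w)) :
    HasDerivAt (fun s : ℝ => f (x + s • w)) ⟪f', w⟫ t := by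
  have hline : HasDerivAt (fun s : ℝ => x + s • w) w t := by
    simpa using ((hasDerivAt_id t).smul_const w).const_add x
  exact (hasGradientAt_iff_hasFDerivAt.mp hf).comp_hasDerivAt t hline

lemma hasGradientAt_norm_sq (x : E) : HasGradientAt (fun u : E => ‖u‖ ^ 2) ((2 : ℝ) • x) x := by
  rw [hasGradientAt_iff_hasFDerivAt]
  refine (hasStrictFDerivAt_norm_sq x).hasFDerivAt.congr_fderiv ?_
  ext y
  simp [InnerProductSpace.toDual_apply_apply]

lemma ConvexOn.inner_gradient_le_sub {g : E → ℝ} {g' x : E} (hg : ConvexOn ℝ univ g)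
    (hx : HasGradientAt g g' x) (y : E) : ⟪g', y - x⟫ ≤ g y - g x := by
  have hline : ConvexOn ℝ univ (fun s : ℝ => g (x + s • (y - x))) := by
    simpa [Function.comp_def, AffineMap.lineMap_apply, add_comm] using
      hg.comp_affineMap (AffineMap.lineMap x y)
  have hd : HasDerivAt (fun s : ℝ => g (x + s • (y - x))) ⟪g', y - x⟫ 0 :=
    HasGradientAt.hasDerivAt_comp_add_smul (by simpa using hx)
  simpa [slope] using hline.le_slope_of_hasDerivAt (mem_univ 0) (mem_univ 1) one_pos hd

lemma le_add_inner_add_of_lipschitz_gradient {f : E → ℝ} {f' : E → E} {L : ℝ}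
    (hf : ∀ x, HasGradientAt f (f' x) x) (hL : ∀ u v, ‖f' u - f' v‖ ≤ L * ‖u - v‖) (x y : E) :
    f y ≤ f x + ⟪f' x, y - x⟫ + L / 2 * ‖y - x‖ ^ 2 := by
  have hφ' : ∀ t ∈ Ioo (0 : ℝ) 1,
      ⟪f' (x + t • (y - x)), y - x⟫ ≤ ⟪f' x, y - x⟫ + L * ‖y - x‖ ^ 2 * t := by
    intro t ht
    have hincr : ⟪f' (x + t • (y - x)) - f' x, y - x⟫ ≤ L * ‖t • (y - x)‖ * ‖y - x‖ :=
      (real_inner_le_norm _ _).trans <| mul_le_mul_of_nonneg_right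
        (by simpa using hL (x + t • (y - x)) x) (norm_nonneg _)
    rw [inner_sub_left, norm_smul, Real.norm_of_nonneg ht.1.le] at hincr
    linarith
  have h := le_add_add_half_of_hasDerivAt_le (fun t _ => (hf _).hasDerivAt_comp_add_smul) hφ'
  simp only [zero_smul, add_zero, one_smul, add_sub_cancel] at h
  linarith

lemma HasGradientAt.sub_half_mul_norm_sq {f : E → ℝ} {f' x : E} (hf : HasGradientAt f f' x)
    (μ : ℝ) :
    HasGradientAt (fun u => f u - μ / 2 * ‖u‖ ^ 2) (f' - μ • x) x := by
  rw [hasGradientAt_iff_hasFDerivAt] at hf ⊢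
  refine (hf.sub ((hasGradientAt_iff_hasFDerivAt.mp (hasGradientAt_norm_sq x)).const_mul
    (μ / 2))).congr_fderiv ?_
  rw [map_sub, map_smul, map_smul, smul_smul]
  norm_num

section Cocoercive

variable {g : E → ℝ} {g' : E → E} {L : ℝ}

lemma ConvexOn.add_inner_gradient_add_le (hL : 0 < L) (hg : ConvexOn ℝ univ g)
    (hg' : ∀ x, HasGradientAt g (g' x) x)
    (hup : ∀ x y, g y ≤ g x + ⟪g' x, y - x⟫ + L / 2 * ‖y - x‖ ^ 2) (x y : E) :
    g x + ⟪g' x, y - x⟫ + 1 / (2 * L) * ‖g' y - g' x‖ ^ 2 ≤ g y := by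
  set d := g' y - g' x
  -- `z` minimises the quadratic upper bound of `g` at `y`.
  set z := y - L⁻¹ • d
  have hlow := hg.inner_gradient_le_sub (hg' x) z
  have hhigh := hup y z
  have hzx : z - x = (y - x) - L⁻¹ • d := by simp only [z]; abel
  have hzy : z - y = -(L⁻¹ • d) := by simp only [z]; abel
  have hd : L⁻¹ * ⟪g' y, d⟫ - L⁻¹ * ⟪g' x, d⟫ = L⁻¹ * ‖d‖ ^ 2 := by
    rw [← mul_sub, ← inner_sub_left, real_inner_self_eq_norm_sq]
  rw [hzx, inner_sub_right, real_inner_smul_right] at hlow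
  rw [hzy, inner_neg_right, real_inner_smul_right, norm_neg, norm_smul, Real.norm_eq_abs,
    mul_pow, sq_abs] at hhigh
  have hquad : L / 2 * (L⁻¹ ^ 2 * ‖d‖ ^ 2) = L⁻¹ * ‖d‖ ^ 2 - 1 / (2 * L) * ‖d‖ ^ 2 := by
    field_simp; ring
  linarith

lemma ConvexOn.norm_sq_gradient_sub_le_mul_inner (hL : 0 < L) (hg : ConvexOn ℝ univ g)
    (hg' : ∀ x, HasGradientAt g (g' x) x)
    (hup : ∀ x y, g y ≤ g x + ⟪g' x, y - x⟫ + L / 2 * ‖y - x‖ ^ 2) (x y : E) :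
    ‖g' x - g' y‖ ^ 2 ≤ L * ⟪g' x - g' y, x - y⟫ := by
  have hxy := hg.add_inner_gradient_add_le hL hg' hup x y
  have hyx := hg.add_inner_gradient_add_le hL hg' hup y x
  have hsum : 1 / L * ‖g' x - g' y‖ ^ 2 ≤ ⟪g' x - g' y, x - y⟫ := by
    rw [norm_sub_rev (g' y), ← neg_sub x y, inner_neg_right] at hxy
    rw [inner_sub_left]
    have : 1 / L * ‖g' x - g' y‖ ^ 2 = 2 * (1 / (2 * L) * ‖g' x - g' y‖ ^ 2) := by
      field_simp
    linarith
  calc ‖g' x - g' y‖ ^ 2 = L * (1 / L * ‖g' x - g' y‖ ^ 2) := by field_simp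
    _ ≤ L * ⟪g' x - g' y, x - y⟫ := by gcongr

end Cocoercive

theorem norm_sq_gradient_sub_add_le_inner {f : E → ℝ} {f' : E → E} {μ β : ℝ} (hμβ : μ < β)
    (hf : ∀ x, HasGradientAt f (f' x) x)
    (hsc : ConvexOn ℝ univ (fun u => f u - μ / 2 * ‖u‖ ^ 2))
    (hsmooth : ∀ u v, ‖f' u - f' v‖ ≤ β * ‖u - v‖) (u v : E) :
    ‖f' u - f' v‖ ^ 2 + μ * β * ‖u - v‖ ^ 2 ≤ (β + μ) * ⟪f' u - f' v, u - v⟫ := by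
  have hup : ∀ x y, f y - μ / 2 * ‖y‖ ^ 2 ≤
      f x - μ / 2 * ‖x‖ ^ 2 + ⟪f' x - μ • x, y - x⟫ + (β - μ) / 2 * ‖y - x‖ ^ 2 := by
    intro x y
    have hdesc := le_add_inner_add_of_lipschitz_gradient hf hsmooth x y
    have hy : ‖y‖ ^ 2 = ‖x‖ ^ 2 + 2 * ⟪x, y - x⟫ + ‖y - x‖ ^ 2 := by
      simpa using norm_add_sq_real x (y - x)
    rw [inner_sub_left, real_inner_smul_left, hy]
    linarith
  have hcoco := hsc.norm_sq_gradient_sub_le_mul_inner (g' := fun x => f' x - μ • x) (sub_pos.2 hμβ)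
    (fun x => (hf x).sub_half_mul_norm_sq μ) hup u v
  set D := f' u - f' v
  set W := u - v
  have hD : f' u - μ • u - (f' v - μ • v) = D - μ • W := by
    simp only [D, W, smul_sub]; abel
  have hnorm : ‖D - μ • W‖ ^ 2 = ‖D‖ ^ 2 - 2 * (μ * ⟪D, W⟫) + μ ^ 2 * ‖W‖ ^ 2 := by
    rw [norm_sub_sq_real, real_inner_smul_right, norm_smul, Real.norm_eq_abs, mul_pow, sq_abs]
  have hinner : ⟪D - μ • W, W⟫ = ⟪D, W⟫ - μ * ‖W‖ ^ 2 := by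
    rw [inner_sub_left, real_inner_smul_left, real_inner_self_eq_norm_sq]
  rw [hD, hnorm, hinner] at hcoco
  nlinarith

/-- If `f` is `μ`-strongly convex and `β`-smooth with `μ < β`, then
`R u = u - (2/(β+μ)) • f' u` is `((β-μ)/(β+μ))`-contractive. -/
theorem strongly_convex_smooth_gradient_contractive
    {p : ℕ} (f : EuclideanSpace ℝ (Fin p) → ℝ) (f' : EuclideanSpace ℝ (Fin p) → EuclideanSpace ℝ (Fin p))
    (μ β : ℝ) (hμ : 0 < μ) (hμβ : μ < β)
    (hgrad : ∀ u, HasGradientAt f (f' u) u)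
    (hsc : ConvexOn ℝ Set.univ (fun u => f u - μ / 2 * ‖u‖ ^ 2))
    (hsmooth : ∀ u v, ‖f' u - f' v‖ ≤ β * ‖u - v‖) :
    (β - μ) / (β + μ) < 1 ∧
    ∀ u v, ‖(u - (2 / (β + μ)) • f' u) - (v - (2 / (β + μ)) • f' v)‖
      ≤ (β - μ) / (β + μ) * ‖u - v‖ := by
  have hβμ : 0 < β + μ := by linarith
  refine ⟨(div_lt_one hβμ).2 (by linarith), fun u v => ?_⟩
  have hR : u - (2 / (β + μ)) • f' u - (v - (2 / (β + μ)) • f' v)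
      = (u - v) - (2 / (β + μ)) • (f' u - f' v) := by
    rw [smul_sub]; abel
  rw [hR, ← abs_of_pos (sub_pos.2 hμβ)]
  exact norm_sub_smul_le_of_sq_add_le_inner hβμ
    (norm_sq_gradient_sub_add_le_inner hμβ hgrad hsc hsmooth u v)
end

section
/- Let F, F' : ℝ^p → ℝ with F = f + φ and F' = f' + φ, where f and f' are convex, differentiable, and L-Lipschitz, and φ is μ-strongly convex and differentiable. Let x = argmin F and x' = argmin F'. Then ‖x - x'‖ ≤ 2L/μ. -/
/-! Strong convexity of `F` and `F'` gives `μ/2 ‖x - x'‖² ≤ F x' - F x` and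
`μ/2 ‖x - x'‖² ≤ F' x - F' x'`. Adding the two, the `φ` terms cancel and the Lipschitz bounds on
`f` and `f'` leave `μ ‖x - x'‖² ≤ 2L ‖x - x'‖`. -/

open Filter Set Topology

section StrongConvexity

variable {E : Type*} [NormedAddCommGroup E] [NormedSpace ℝ E] {s : Set E} {m : ℝ} {f g : E → ℝ}

theorem ConvexOn.add_strongConvexOn (hf : ConvexOn ℝ s f) (hg : StrongConvexOn s m g) :
    StrongConvexOn s m (f + g) := by
  unfold StrongConvexOn
  simpa using hf.uniformConvexOn_zero.add hg

theorem StrongConvexOn.mul_sq_norm_sub_le_of_isMinOn {x y : E} (hf : StrongConvexOn s m f)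
    (hx : IsMinOn f s x) (hxs : x ∈ s) (hys : y ∈ s) :
    m / 2 * ‖y - x‖ ^ 2 ≤ f y - f x := by
  set c := m / 2 * ‖y - x‖ ^ 2
  -- Compare `f x` with `f` on the segment `[x, y]` near `x`, then let the segment shrink.
  have hsegment : ∀ t ∈ Ioo (0 : ℝ) 1, (1 - t) * c ≤ f y - f x := by
    rintro t ⟨ht0, ht1⟩
    have hconv := hf.2 hxs hys (sub_nonneg.2 ht1.le) ht0.le (sub_add_cancel 1 t)
    have hmin := isMinOn_iff.mp hx _
      (hf.1 hxs hys (sub_nonneg.2 ht1.le) ht0.le (sub_add_cancel 1 t))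
    simp only [norm_sub_rev x y, smul_eq_mul] at hconv
    change _ ≤ _ - (1 - t) * t * c at hconv
    refine le_of_mul_le_mul_left ?_ ht0
    linarith
  have hlim : Tendsto (fun t : ℝ => (1 - t) * c) (𝓝[>] 0) (𝓝 c) :=
    (Continuous.tendsto' (by fun_prop) 0 c (by simp)).mono_left nhdsWithin_le_nhds
  exact le_of_tendsto hlim (eventually_of_mem (Ioo_mem_nhdsGT one_pos) hsegment)

end StrongConvexity

theorem argmin_sensitivity_general
    {p : ℕ} (f f' φ : EuclideanSpace ℝ (Fin p) → ℝ)
    (L μ : ℝ) (hL : 0 < L) (hμ : 0 < μ)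
    (hfconv : ConvexOn ℝ Set.univ f) (hf'conv : ConvexOn ℝ Set.univ f')
    (hfLip : ∀ u v, |f u - f v| ≤ L * ‖u - v‖)
    (hf'Lip : ∀ u v, |f' u - f' v| ≤ L * ‖u - v‖)
    (hφsc : ConvexOn ℝ Set.univ (fun u => φ u - μ / 2 * ‖u‖ ^ 2))
    (x x' : EuclideanSpace ℝ (Fin p))
    (hx : IsMinOn (fun u => f u + φ u) Set.univ x)
    (hx' : IsMinOn (fun u => f' u + φ u) Set.univ x') :
    ‖x - x'‖ ≤ 2 * L / μ := by
  have hφ : StrongConvexOn univ μ φ := strongConvexOn_iff_convex.mpr hφsc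
  have hgrowth := (hfconv.add_strongConvexOn hφ).mul_sq_norm_sub_le_of_isMinOn hx
    (mem_univ x) (mem_univ x')
  have hgrowth' := (hf'conv.add_strongConvexOn hφ).mul_sq_norm_sub_le_of_isMinOn hx'
    (mem_univ x') (mem_univ x)
  have hlip := (le_abs_self _).trans (hfLip x' x)
  have hlip' := (le_abs_self _).trans (hf'Lip x x')
  simp only [Pi.add_apply, norm_sub_rev x' x] at hgrowth hgrowth' hlip
  have hquad : μ * ‖x - x'‖ ^ 2 ≤ 2 * L * ‖x - x'‖ := by linarith
  rcases (norm_nonneg (x - x')).eq_or_lt with hzero | hpos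
  · rw [← hzero]; positivity
  · rw [le_div_iff₀ hμ]; nlinarith

/-- Sensitivity of the argmin of strongly convex functions: if `F = f + φ`, `F' = f' + φ`
with `f, f'` convex differentiable `L`-Lipschitz and `φ` `μ`-strongly convex differentiable,
then the minimizers `x` of `F` and `x'` of `F'` satisfy `‖x - x'‖ ≤ 2L/μ`. -/
theorem argmin_sensitivity
    {p : ℕ} (f f' φ : EuclideanSpace ℝ (Fin p) → ℝ)
    (L μ : ℝ) (hL : 0 < L) (hμ : 0 < μ)
    (hfconv : ConvexOn ℝ Set.univ f) (hf'conv : ConvexOn ℝ Set.univ f')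
    (hfdiff : Differentiable ℝ f) (hf'diff : Differentiable ℝ f')
    (hφdiff : Differentiable ℝ φ)
    (hfLip : ∀ u v, |f u - f v| ≤ L * ‖u - v‖)
    (hf'Lip : ∀ u v, |f' u - f' v| ≤ L * ‖u - v‖)
    (hφsc : ConvexOn ℝ Set.univ (fun u => φ u - μ / 2 * ‖u‖ ^ 2))
    (x x' : EuclideanSpace ℝ (Fin p))
    (hx : IsMinOn (fun u => f u + φ u) Set.univ x)
    (hx' : IsMinOn (fun u => f' u + φ u) Set.univ x') :
    ‖x - x'‖ ≤ 2 * L / μ :=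
  argmin_sensitivity_general f f' φ L μ hL hμ hfconv hf'conv hfLip hf'Lip hφsc x x' hx hx'
end

section
/- Let f and f' be convex differentiable L-Lipschitz functions on ℝ^p, γ > 0, and v ∈ ℝ^p. Then ‖prox_{γf}(v) - prox_{γf'}(v)‖ ≤ 2Lγ. -/
open RealInnerProductSpace

lemma prox_varineq {p : ℕ} (f : EuclideanSpace ℝ (Fin p) → ℝ) (γ : ℝ) (hγ : 0 < γ)
    (hconv : ConvexOn ℝ Set.univ f) (v x y : EuclideanSpace ℝ (Fin p))
    (hx : IsMinOn (fun u => f u + 1 / (2 * γ) * ‖u - v‖ ^ 2) Set.univ x) :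
    f x - (1 / γ) * ⟪x - v, y - x⟫ ≤ f y := by
  have key : ∀ t : ℝ, 0 < t → t ≤ 1 →
      f x - (1 / γ) * ⟪x - v, y - x⟫ - f y ≤ t * (1 / (2 * γ) * ‖y - x‖ ^ 2) := by
    intro t ht ht1
    have hz := hx (Set.mem_univ (x + t • (y - x)))
    simp only [Set.mem_setOf_eq] at hz
    have hconvt : f (x + t • (y - x)) ≤ (1 - t) * f x + t * f y := by
      have h := hconv.2 (Set.mem_univ x) (Set.mem_univ y)
        (by linarith : (0:ℝ) ≤ 1 - t) ht.le (by ring)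
      have he : (1 - t) • x + t • y = x + t • (y - x) := by
        rw [smul_sub, sub_smul, one_smul]; abel
      rwa [he, smul_eq_mul, smul_eq_mul] at h
    have hnorm : ‖x + t • (y - x) - v‖ ^ 2
        = ‖x - v‖ ^ 2 + 2 * t * ⟪x - v, y - x⟫ + t ^ 2 * ‖y - x‖ ^ 2 := by
      have h1 : x + t • (y - x) - v = (x - v) + t • (y - x) := by abel
      rw [h1, norm_add_sq_real, real_inner_smul_right, norm_smul, mul_pow]
      simp only [Real.norm_eq_abs, sq_abs]
      ring
    rw [hnorm] at hz
    have hins : 1 / (2 * γ) * (2 * t * ⟪x - v, y - x⟫)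
        = t * ((1 / γ) * ⟪x - v, y - x⟫) := by
      field_simp
    have hstep : t * (f x - (1 / γ) * ⟪x - v, y - x⟫ - f y
        - t * (1 / (2 * γ) * ‖y - x‖ ^ 2)) ≤ 0 := by
      nlinarith [hz, hconvt, hins]
    by_contra hcon
    push_neg at hcon
    nlinarith [mul_pos ht (sub_pos.mpr hcon)]
  by_contra h
  push_neg at h
  set a := f x - (1 / γ) * ⟪x - v, y - x⟫ - f y with ha
  have h' : 0 < a := by simp only [ha]; linarith
  set C : ℝ := 1 / (2 * γ) * ‖y - x‖ ^ 2 with hC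
  have hC0 : 0 ≤ C := by positivity
  have ht : 0 < min 1 (a / (2 * (C + 1))) := lt_min one_pos (by positivity)
  have hk := key _ ht (min_le_left _ _)
  have h2 : min 1 (a / (2 * (C + 1))) ≤ a / (2 * (C + 1)) := min_le_right _ _
  have hmm : min 1 (a / (2 * (C + 1))) * C ≤ a / (2 * (C + 1)) * C :=
    mul_le_mul_of_nonneg_right h2 hC0
  have hlt : a / (2 * (C + 1)) * C < a := by
    rw [div_mul_eq_mul_div, div_lt_iff₀ (by positivity)]
    nlinarith
  have hk' : a ≤ min 1 (a / (2 * (C + 1))) * C := hk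
  linarith

/-- Sensitivity of the proximal operator: for convex differentiable `L`-Lipschitz `f, f'`
and `γ > 0`, `‖prox_{γ f}(v) - prox_{γ f'}(v)‖ ≤ 2Lγ`. -/
theorem prox_sensitivity
    {p : ℕ} (f f' : EuclideanSpace ℝ (Fin p) → ℝ)
    (L γ : ℝ) (hL : 0 < L) (hγ : 0 < γ)
    (hfconv : ConvexOn ℝ Set.univ f) (hf'conv : ConvexOn ℝ Set.univ f')
    (hfdiff : Differentiable ℝ f) (hf'diff : Differentiable ℝ f')
    (hfLip : ∀ u w, |f u - f w| ≤ L * ‖u - w‖)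
    (hf'Lip : ∀ u w, |f' u - f' w| ≤ L * ‖u - w‖)
    (v x x' : EuclideanSpace ℝ (Fin p))
    (hx : IsMinOn (fun u => f u + 1 / (2 * γ) * ‖u - v‖ ^ 2) Set.univ x)
    (hx' : IsMinOn (fun u => f' u + 1 / (2 * γ) * ‖u - v‖ ^ 2) Set.univ x') :
    ‖x - x'‖ ≤ 2 * L * γ := by
  have h1 := prox_varineq f γ hγ hfconv v x x' hx
  have h2 := prox_varineq f' γ hγ hf'conv v x' x hx'
  have hinner : (⟪x - v, x' - x⟫ : ℝ) + ⟪x' - v, x - x'⟫ = -‖x - x'‖ ^ 2 := by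
    rw [← real_inner_self_eq_norm_sq]
    simp only [inner_sub_left, inner_sub_right]
    linarith [real_inner_comm x x', real_inner_comm x v, real_inner_comm x' v]
  have hl1 : f x' - f x ≤ L * ‖x - x'‖ := by
    have h := (abs_le.mp (hfLip x x')).1
    linarith
  have hl2 : f' x - f' x' ≤ L * ‖x - x'‖ := by
    have h := hf'Lip x' x
    rw [norm_sub_rev] at h
    have := (abs_le.mp h).1
    linarith
  have hs : (1 / γ) * ((⟪x - v, x' - x⟫ : ℝ) + ⟪x' - v, x - x'⟫)
      = (1 / γ) * (-‖x - x'‖ ^ 2) := by rw [hinner]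
  have hmain : (1 / γ) * ‖x - x'‖ ^ 2 ≤ 2 * L * ‖x - x'‖ := by
    linarith [h1, h2, hs, hl1, hl2]
  by_contra h
  push_neg at h
  have hnpos : 0 < ‖x - x'‖ := lt_trans (by positivity) h
  rw [div_mul_eq_mul_div, one_mul, div_le_iff₀ hγ] at hmain
  nlinarith [mul_lt_mul_of_pos_left h hnpos]
end

section
/- Let q ∈ (0,1], τ ∈ [0,1), c > 0, and b = √(1 - q(1-τ)). Define χ = 1 - (1+b)(1+c - q/2)/(2(1+c)). Then χ > q(1-τ)/4. -/
/-- Lower bound on the contraction factor `χ`. -/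
theorem chi_lower_bound (q τ c : ℝ) (hq : q ∈ Set.Ioc (0 : ℝ) 1)
    (hτ : τ ∈ Set.Ico (0 : ℝ) 1) (hc : 0 < c) :
    1 - (1 + Real.sqrt (1 - q * (1 - τ))) * (1 + c - q / 2) / (2 * (1 + c))
      > q * (1 - τ) / 4 := by
  obtain ⟨hq0, hq1⟩ := hq
  obtain ⟨hτ0, hτ1⟩ := hτ
  set s := q * (1 - τ) with hs_def
  have hs0 : 0 < s := mul_pos hq0 (by linarith)
  have hs1 : s ≤ 1 := by nlinarith
  set b := Real.sqrt (1 - s) with hb_def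
  have hb0 : 0 ≤ b := Real.sqrt_nonneg _
  have hb2 : b ^ 2 = 1 - s := Real.sq_sqrt (by linarith)
  have hb1 : b < 1 := by nlinarith [hb2, hb0, hs0]
  have h1c : (0 : ℝ) < 2 * (1 + c) := by linarith
  rw [gt_iff_lt, ← sub_pos]
  have heq : 1 - (1 + b) * (1 + c - q / 2) / (2 * (1 + c)) - s / 4
      = (4 * (2 * (1 + c)) - 4 * (1 + b) * (1 + c - q / 2) - s * (2 * (1 + c))) / (4 * (2 * (1 + c))) := by
    field_simp
  rw [heq]
  apply div_pos _ (by linarith)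
  nlinarith [mul_pos (mul_pos hs0 (show (0:ℝ) < 1 + c by linarith)) (show (0:ℝ) < 1 - b by linarith), mul_pos hq0 (mul_pos (show (0:ℝ) < 1 + b by linarith) (show (0:ℝ) < 1 + b by linarith)), hb0, hb2]
end

section
/- Let q ∈ (0,1], τ ∈ [0,1), c > 0, and b = √(1 - q(1-τ)). Define χ = 1 - (1+b)(1+c - q/2)/(2(1+c)). Then χ ≤ 1 - q²(1-τ)/8. -/
/-- Upper bound on the contraction factor `χ`. -/
theorem chi_upper_bound (q τ c : ℝ) (hq : q ∈ Set.Ioc (0 : ℝ) 1)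
    (hτ : τ ∈ Set.Ico (0 : ℝ) 1) (hc : 0 < c) :
    1 - (1 + Real.sqrt (1 - q * (1 - τ))) * (1 + c - q / 2) / (2 * (1 + c))
      ≤ 1 - q ^ 2 * (1 - τ) / 8 := by
  obtain ⟨hq0, hq1⟩ := hq
  obtain ⟨hτ0, hτ1⟩ := hτ
  have hb : 0 ≤ Real.sqrt (1 - q * (1 - τ)) := Real.sqrt_nonneg _
  have key : q ^ 2 * (1 - τ) / 8 ≤
      (1 + Real.sqrt (1 - q * (1 - τ))) * (1 + c - q / 2) / (2 * (1 + c)) := by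
    rw [div_le_div_iff₀ (by norm_num) (by linarith)]
    have h1 : q ^ 2 * (1 - τ) ≤ 1 := by nlinarith
    nlinarith [mul_nonneg hb (show (0:ℝ) ≤ 1 + c - q / 2 by linarith),
      mul_nonneg (show (0:ℝ) ≤ 1 - q ^ 2 * (1 - τ) by linarith) hc.le]
  linarith
end

section
/- Let q ∈ (0,1], τ ∈ [0,1), c > 0, b = √(1 - q(1-τ)), and σ₁ = (1+c)(1-τ). Then the quantity λ* = (1/(1-b))·(1 - q/(2(1+c))) satisfies λ* > (1+c-q)/((1+c)(1-b)) and λ* < ((1+c-q)/((1+c)(1-b)))·(1/2 + (1/2)√(1 + 4(1+c)(1-b)/((1-τ)(1+c-q)²))). -/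
/-!
With `p = 1 + c` and `s = 1 - b`, one has `λ* = A · (1/2 + (1/2) · p/(p - q))` where
`A = (p - q)/(p s)`. The lower bound is then `q > 0`. For the upper bound, squaring reduces
`p/(p - q) < √(1 + 4 p s/((1 - τ)(p - q)²))` to `q (2p - q) < 4 p s/(1 - τ)`, which follows from
the concavity estimate `1 - √(1 - x) ≥ x/2` applied to `x = q (1 - τ)`.
-/

namespace Real

theorem half_le_one_sub_sqrt_one_sub {x : ℝ} (hx : x ≤ 2) : x / 2 ≤ 1 - √(1 - x) := by
  have : √(1 - x) ≤ 1 - x / 2 :=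
    sqrt_le_iff.mpr ⟨by linarith, by nlinarith [sq_nonneg x]⟩
  linarith

theorem sqrt_one_sub_lt_one {x : ℝ} (hx : 0 < x) : √(1 - x) < 1 :=
  (sqrt_lt' one_pos).mpr (by linarith)

end Real

section LearningRate

variable {p q s : ℝ}

theorem sub_div_mul_lt_inv_mul_one_sub_div_two_mul (hq : 0 < q) (hp : 0 < p) (hs : 0 < s) :
    (p - q) / (p * s) < (1 / s) * (1 - q / (2 * p)) := by
  have hform : (1 / s) * (1 - q / (2 * p)) = (2 * p - q) / (2 * p * s) := by
    field_simp
  rw [hform, div_lt_div_iff₀ (by positivity) (by positivity)]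
  nlinarith [mul_pos (mul_pos hq hp) hs]

theorem inv_mul_one_sub_div_two_mul_eq (hp : p ≠ 0) (hs : s ≠ 0) (hpq : p - q ≠ 0) :
    (1 / s) * (1 - q / (2 * p)) = ((p - q) / (p * s)) * (1 / 2 + (1 / 2) * (p / (p - q))) := by
  field_simp
  ring

theorem div_sub_lt_sqrt_one_add {t : ℝ} (hq : 0 < q) (hpq : q < p) (ht : 0 < t)
    (hqt : q * t ≤ 2 * s) :
    p / (p - q) < √(1 + 4 * p * s / (t * (p - q) ^ 2)) := by
  have hd : 0 < p - q := by linarith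
  have hsq : (p / (p - q)) ^ 2 = 1 + q * (2 * p - q) / (p - q) ^ 2 := by
    field_simp
    ring
  have hnum : q * (2 * p - q) < 4 * p * s / t := by
    rw [lt_div_iff₀ ht]
    nlinarith [mul_pos hq hq]
  rw [Real.lt_sqrt (div_pos (by linarith) hd).le, hsq, ← div_div]
  gcongr

end LearningRate

/-- The chosen learning rate `λ* = (1/(1-b))(1 - q/(2(1+c)))` lies in the valid range. -/
theorem lrate_in_range (q τ c : ℝ) (hq : q ∈ Set.Ioc (0 : ℝ) 1)
    (hτ : τ ∈ Set.Ico (0 : ℝ) 1) (hc : 0 < c) :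
    let b := Real.sqrt (1 - q * (1 - τ))
    let lam := (1 / (1 - b)) * (1 - q / (2 * (1 + c)))
    (1 + c - q) / ((1 + c) * (1 - b)) < lam ∧
    lam < ((1 + c - q) / ((1 + c) * (1 - b))) *
      (1 / 2 + (1 / 2) * Real.sqrt (1 + 4 * (1 + c) * (1 - b) / ((1 - τ) * (1 + c - q) ^ 2))) := by
  obtain ⟨hq0, hq1⟩ := hq
  obtain ⟨hτ0, hτ1⟩ := hτ
  intro b lam
  have ht : 0 < 1 - τ := by linarith
  have hqt : 0 < q * (1 - τ) := mul_pos hq0 ht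
  have hs : 0 < 1 - b := sub_pos.mpr (Real.sqrt_one_sub_lt_one hqt)
  have hqt_le : q * (1 - τ) ≤ 2 * (1 - b) := by
    have := Real.half_le_one_sub_sqrt_one_sub (x := q * (1 - τ)) (by nlinarith)
    linarith
  have hpq : q < 1 + c := by linarith
  refine ⟨sub_div_mul_lt_inv_mul_one_sub_div_two_mul hq0 (by linarith) hs, ?_⟩
  rw [show lam = _ from inv_mul_one_sub_div_two_mul_eq (by linarith) hs.ne' (by linarith)]
  have hA : 0 < (1 + c - q) / ((1 + c) * (1 - b)) := by
    have : 0 < 1 + c - q := by linarith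
    positivity
  have hkey := div_sub_lt_sqrt_one_add hq0 hpq ht hqt_le
  exact mul_lt_mul_of_pos_left (by linarith) hA
end
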